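/- arXiv:math/9908075 — 5 statements merged into one kernel-verified Lean document; each statement's English description precedes it below -/
import Mathlib

section
/- Let G be an abelian group with a smooth increasing filtration {G_α : α < τ} indexed by an ordinal τ (i.e., G_α ⊆ G_{α+1} for all α, G_β = ⋃_{α<β} G_α for every limit ordinal β < τ, and G = ⋃_{α<τ} G_α). If G_0 is a free abelian group and the quotient G_{α+1}/G_α is free abelian for every α < τ, then G is a free abelian group. -/
/-!
Each quotient `F (α + 1) / F α` is free, hence projective, so `F α` has a complement `C α` in
`F (α + 1)` isomorphic to that quotient. Then `G` is the internal direct sum of `F 0` and the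
`C α`: the summands before `C α` all lie in `F α`, which meets `C α` trivially, and a transfinite
induction, using smoothness at limit ordinals, shows that every `F β` lies in their sum.
-/

theorem Submodule.exists_compl_of_projective_quotient {R M : Type*} [Ring R] [AddCommGroup M]
    [Module R M] {A B : Submodule R M} (hAB : A ≤ B)
    [Module.Projective R (B ⧸ A.submoduleOf B)] :
    ∃ C : Submodule R M, Disjoint C A ∧ A ⊔ C = B ∧ Nonempty (C ≃ₗ[R] B ⧸ A.submoduleOf B) := by
  obtain ⟨s, hs⟩ := (A.submoduleOf B).mkQ.exists_rightInverse_of_surjective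
    (A.submoduleOf B).range_mkQ
  have hs' (q) : (A.submoduleOf B).mkQ (s q) = q := LinearMap.congr_fun hs q
  have hs_inj : Function.Injective (B.subtype ∘ₗ s) :=
    B.injective_subtype.comp (Function.LeftInverse.injective hs')
  refine ⟨LinearMap.range (B.subtype ∘ₗ s), ?_, le_antisymm ?_ ?_,
    ⟨(LinearEquiv.ofInjective _ hs_inj).symm⟩⟩
  · rw [Submodule.disjoint_def]
    rintro _ ⟨q, rfl⟩ hqA
    have hq : (A.submoduleOf B).mkQ (s q) = 0 := (Submodule.Quotient.mk_eq_zero _).mpr hqA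
    rw [hs'] at hq
    rw [hq, map_zero]
  · refine sup_le hAB ?_
    rintro _ ⟨q, rfl⟩
    exact (s q).2
  · intro x hx
    have hdiff : (⟨x, hx⟩ - s ((A.submoduleOf B).mkQ ⟨x, hx⟩) : B) ∈ A.submoduleOf B := by
      rw [← Submodule.Quotient.mk_eq_zero, ← Submodule.mkQ_apply, map_sub, hs', sub_self]
    exact Submodule.mem_sup.mpr ⟨_, hdiff, _, ⟨(A.submoduleOf B).mkQ ⟨x, hx⟩, rfl⟩, by simp⟩

theorem Submodule.iSupIndep_of_disjoint_iSup_lt {ι R M : Type*} [LinearOrder ι] [Ring R]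
    [AddCommGroup M] [Module R M] {N : ι → Submodule R M}
    (h : ∀ i, Disjoint (N i) (⨆ j < i, N j)) : iSupIndep N := by
  classical
  rw [iSupIndep_iff_finsetSum_eq_zero_imp_eq_zero]
  intro s v hv hsum
  induction s using Finset.induction_on_max with
  | empty => simp
  | insert a s hlt ih =>
    rw [Finset.sum_insert (fun ha => (hlt a ha).false)] at hsum
    have hva : v a = 0 := by
      refine (Submodule.disjoint_def.mp (h a)) _ (hv a (Finset.mem_insert_self a s)) ?_
      rw [eq_neg_of_add_eq_zero_left hsum, Submodule.neg_mem_iff]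
      exact SetLike.le_def.mp (biSup_mono fun j hj => hlt j hj)
        (Submodule.sum_mem_biSup fun i hi => hv i (Finset.mem_insert_of_mem hi))
    rw [hva, zero_add] at hsum
    intro i hi
    rcases Finset.mem_insert.mp hi with rfl | hi
    · exact hva
    · exact ih (fun j hj => hv j (Finset.mem_insert_of_mem hj)) hsum i hi

theorem DirectSum.IsInternal.free {ι R M : Type*} [DecidableEq ι] [Ring R] [AddCommGroup M]
    [Module R M] {N : ι → Submodule R M} (h : DirectSum.IsInternal N)
    [∀ i, Module.Free R (N i)] : Module.Free R M :=
  .of_basis (h.collectedBasis fun i => Module.Free.chooseBasis R (N i))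

theorem Ordinal.le_of_smooth_of_le_zero_of_le_succ {α : Type*} [CompleteLattice α]
    {τ : Ordinal} {p : Ordinal → α} {a : α}
    (hlim : ∀ β : Ordinal, β < τ → Order.IsSuccLimit β →
      p β = ⨆ γ : {g : Ordinal // g < β}, p γ.1)
    (h0 : p 0 ≤ a) (hsucc : ∀ β : Ordinal, β + 1 < τ → p β ≤ a → p (β + 1) ≤ a) :
    ∀ β < τ, p β ≤ a := by
  intro β
  induction β using WellFoundedLT.induction with
  | _ β ih =>
    intro hβ
    rcases Ordinal.zero_or_succ_or_isSuccLimit β with rfl | ⟨γ, rfl⟩ | hβlim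
    · exact h0
    · rw [Order.succ_eq_add_one] at hβ ⊢
      exact hsucc γ hβ (ih γ (Order.lt_succ γ) ((lt_add_one γ).trans hβ))
    · rw [hlim β hβ hβlim]
      exact iSup_le fun γ => ih γ γ.2 (γ.2.trans hβ)

theorem Module.Free.of_smooth_filtration {R M : Type*} [Ring R] [AddCommGroup M] [Module R M]
    (τ : Ordinal) (p : Ordinal → Submodule R M)
    (hmono : ∀ α β : Ordinal, α ≤ β → β < τ → p α ≤ p β)
    (hlim : ∀ β : Ordinal, β < τ → Order.IsSuccLimit β →
      p β = ⨆ α : {a : Ordinal // a < β}, p α.1)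
    (hunion : ⨆ α : {a : Ordinal // a < τ}, p α.1 = ⊤)
    (h0 : Module.Free R (p 0))
    (hquot : ∀ α : Ordinal, α + 1 < τ →
      Module.Free R (p (α + 1) ⧸ (p α).submoduleOf (p (α + 1)))) :
    Module.Free R M := by
  classical
  have hlt {α : Ordinal} (h : α + 1 < τ) : α < τ := (lt_add_one α).trans h
  have hcompl (α : {α : Ordinal // α + 1 < τ}) :
      ∃ C : Submodule R M, Disjoint C (p α) ∧ p α ⊔ C = p (α + 1) ∧ Module.Free R C := by
    have := hquot α α.2
    obtain ⟨C, hdisj, hsup, ⟨e⟩⟩ :=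
      Submodule.exists_compl_of_projective_quotient (hmono α (α + 1) le_self_add α.2)
    exact ⟨C, hdisj, hsup, .of_equiv e.symm⟩
  choose C hCdisj hCsup hCfree using hcompl
  -- `⊥` indexes `p 0`; `p τ` is not part of the filtration, hence only `α + 1 < τ` gets a `C α`.
  let N : WithBot {α : Ordinal // α + 1 < τ} → Submodule R M := fun i => i.recBotCoe (p 0) C
  have hN_lt (α : {α : Ordinal // α + 1 < τ}) : ⨆ j < (α : WithBot _), N j ≤ p α := by
    refine iSup₂_le fun j hj => ?_
    induction j using WithBot.recBotCoe with
    | bot => exact hmono 0 α zero_le (hlt α.2)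
    | coe β =>
      have hβα : β.1 + 1 ≤ α := Order.add_one_le_of_lt (WithBot.coe_lt_coe.mp hj : β < α)
      exact le_sup_right.trans ((hCsup β).le.trans (hmono _ _ hβα (hlt α.2)))
  have hindep : iSupIndep N := by
    refine Submodule.iSupIndep_of_disjoint_iSup_lt fun i => ?_
    induction i using WithBot.recBotCoe with
    | bot => simp
    | coe α => exact (hCdisj α).mono_right (hN_lt α)
  have hspan : ⨆ i, N i = ⊤ := by
    refine eq_top_iff.mpr (hunion ▸ iSup_le fun β => ?_)
    refine Ordinal.le_of_smooth_of_le_zero_of_le_succ hlim (le_iSup N ⊥)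
      (fun α hα hle => ?_) β β.2
    rw [← hCsup ⟨α, hα⟩]
    exact sup_le hle (le_iSup N (⟨α, hα⟩ : {α : Ordinal // α + 1 < τ}))
  have hNfree (i) : Module.Free R (N i) := by
    induction i using WithBot.recBotCoe with
    | bot => exact h0
    | coe α => exact hCfree α
  exact (DirectSum.isInternal_submodule_of_iSupIndep_of_iSup_eq_top hindep hspan).free

/-- Eklof's criterion: an abelian group with a smooth increasing filtration
indexed by an ordinal `τ`, whose bottom group is free and all successive
quotients are free, is itself free. -/
theorem eklof_free_of_smooth_filtration
    (G : Type*) [AddCommGroup G] (τ : Ordinal)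
    (F : Ordinal → AddSubgroup G)
    (hmono : ∀ α β : Ordinal, α ≤ β → β < τ → F α ≤ F β)
    (hlim : ∀ β : Ordinal, β < τ → Order.IsSuccLimit β →
      F β = ⨆ α : {a : Ordinal // a < β}, F α.1)
    (hunion : (⨆ α : {a : Ordinal // a < τ}, F α.1) = ⊤)
    (h0 : Module.Free ℤ (F 0))
    (hquot : ∀ α : Ordinal, α < τ →
      Module.Free ℤ ((F (α + 1)) ⧸ ((F α).addSubgroupOf (F (α + 1))))) :
    Module.Free ℤ G := by
  refine Module.Free.of_smooth_filtration τ (fun α => (F α).toIntSubmodule)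
    (fun α β hαβ hβ => AddSubgroup.toIntSubmodule.monotone (hmono α β hαβ hβ))
    (fun β hβ hβlim => by rw [hlim β hβ hβlim, OrderIso.map_iSup])
    (by rw [← OrderIso.map_iSup, hunion, OrderIso.map_top]) h0 (fun α hα => ?_)
  have := hquot α ((lt_add_one α).trans hα)
  exact .of_equiv (AddEquiv.refl (F (α + 1) ⧸ (F α).addSubgroupOf (F (α + 1)))).toIntLinearEquiv
end

section
/- An uncountable abelian group G of cardinality τ is free if and only if it admits a smooth decomposition {G_α : α < τ} such that G_0 is countable and free and G_{α+1}/G_α is countable and free for every α < τ. -/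
/-!
A free abelian group of uncountable cardinality `τ` has a basis indexed by the ordinals below
`τ.ord`; the spans of its initial segments form the decomposition, with infinite cyclic successive
quotients. Conversely, lift a basis of every quotient `F (α + 1) / F α` to `G` and add a basis of
`F 0`. These vectors span `G` by transfinite induction along the chain, and a linear relation
among them vanishes stage by stage, starting from the largest stage it involves.
-/

open Cardinal Submodule

theorem Ordinal.apply_le_of_continuous {α : Type*} [CompleteLattice α] {o : Ordinal}
    {F : Ordinal → α} {S : α}
    (hlim : ∀ β < o, Order.IsSuccLimit β → F β = ⨆ γ : {a // a < β}, F γ.1)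
    (h0 : F 0 ≤ S) (hsucc : ∀ β, β + 1 < o → F β ≤ S → F (β + 1) ≤ S) {β : Ordinal}
    (hβ : β < o) : F β ≤ S := by
  induction β using Ordinal.limitRecOn with
  | zero => exact h0
  | add_one β ih => exact hsucc β hβ (ih ((lt_add_one β).trans hβ))
  | limit β hβlim ih =>
    rw [hlim β hβ hβlim]
    exact iSup_le fun γ => ih γ.1 γ.2 (γ.2.trans hβ)

section

variable {R M : Type*} [Ring R] [AddCommGroup M] [Module R M]

theorem linearIndependent_mkQ_of_graded {ι γ : Type*} [LinearOrder γ] (deg : ι → γ)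
    {v : ι → M}
    {B : Submodule R M} {P : γ → Submodule R M} (hB : ∀ a, B ≤ P a)
    (hv : ∀ i a, deg i < a → v i ∈ P a)
    (hind : ∀ a, LinearIndepOn R ((P a).mkQ ∘ v) {i | deg i = a}) :
    LinearIndependent R (B.mkQ ∘ v) := by
  classical
  suffices key : ∀ (S : Finset γ) (l : ι →₀ R), (∀ i ∈ l.support, deg i ∈ S) →
      Finsupp.linearCombination R v l ∈ B → l = 0 by
    refine linearIndependent_iff.mpr fun l hl => key (l.support.image deg) l
      (fun i hi => Finset.mem_image_of_mem deg hi) ?_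
    rwa [← Finsupp.apply_linearCombination, mkQ_apply, Quotient.mk_eq_zero] at hl
  intro S
  induction S using Finset.induction_on_max with
  | empty =>
    intro l hl _
    simpa [Finsupp.ext_iff] using hl
  | insert α S hlt ih =>
    intro l hl hlB
    set low := l.filter (deg · ≠ α)
    have hlow_deg : ∀ i ∈ low.support, deg i ∈ S := fun i hi => by
      rw [Finsupp.support_filter, Finset.mem_filter] at hi
      exact (Finset.mem_insert.mp (hl i hi.1)).resolve_left hi.2
    have hlow : Finsupp.linearCombination R v low ∈ P α := by
      rw [Finsupp.linearCombination_apply]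
      exact Submodule.finsuppSum_mem _ _ _ _ fun i hi =>
        smul_mem _ _ (hv i α (hlt _ (hlow_deg i (Finsupp.mem_support_iff.mpr hi))))
    have htop : l.filter (deg · = α) = 0 := by
      refine linearIndepOn_iff.mp (hind α) _ ?_ ?_
      · exact fun i hi => (Finset.mem_filter.mp hi).2
      · have hsplit := congrArg (Finsupp.linearCombination R v)
          (Finsupp.filter_add_filter_not l (deg · = α))
        rw [map_add] at hsplit
        rw [← Finsupp.apply_linearCombination, mkQ_apply, Quotient.mk_eq_zero,
          eq_sub_of_add_eq hsplit]
        exact sub_mem (hB α hlB) hlow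
    have hl_eq : l = low := by
      conv_lhs => rw [← Finsupp.filter_add_filter_not l (deg · = α), htop, zero_add]
    exact hl_eq.trans (ih low hlow_deg (hl_eq ▸ hlB))

theorem LinearIndependent.sum_elim_of_mkQ {ι ι' : Type*} {B : Submodule R M} {f : ι → M}
    {g : ι' → M} (hf : LinearIndependent R f) (hfB : ∀ i, f i ∈ B)
    (hg : LinearIndependent R (B.mkQ ∘ g)) : LinearIndependent R (Sum.elim f g) := by
  refine linearIndependent_sum.mpr ⟨hf, hg.of_comp _, ?_⟩
  refine Disjoint.mono_left (span_le.mpr (Set.range_subset_iff.mpr hfB)) (disjoint_def.mpr ?_)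
  intro x hxB hx
  rw [← Finsupp.range_linearCombination] at hx
  obtain ⟨l, rfl⟩ := hx
  have hl : l = 0 := linearIndependent_iff.mp hg l <| by
    rwa [← Finsupp.apply_linearCombination, mkQ_apply, Quotient.mk_eq_zero]
  rw [hl, map_zero]

theorem Submodule.exists_lift_basis_quotient {N N' : Submodule R M} {κ : Type*}
    (b : Module.Basis κ R (N' ⧸ N.submoduleOf N')) :
    ∃ w : κ → M, (∀ i, w i ∈ N') ∧ LinearIndependent R (N.mkQ ∘ w) ∧
      N' ≤ N ⊔ span R (Set.range w) := by
  choose ℓ hℓ using fun i => (N.submoduleOf N').mkQ_surjective (b i)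
  refine ⟨fun i => ℓ i, fun i => (ℓ i).2, ?_, ?_⟩
  · have hker : LinearMap.ker (N.mkQ ∘ₗ N'.subtype) = N.submoduleOf N' := by
      rw [LinearMap.ker_comp, ker_mkQ]; rfl
    let φ := (N.submoduleOf N').liftQ (N.mkQ ∘ₗ N'.subtype) hker.ge
    have hφ : N.mkQ ∘ (fun i => (ℓ i : M)) = φ ∘ b := by
      funext i
      rw [Function.comp_apply, Function.comp_apply, ← hℓ i]
      rfl
    rw [hφ]
    exact b.linearIndependent.map' φ (ker_liftQ_eq_bot _ _ _ hker.le)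
  · have hsup : N.submoduleOf N' ⊔ span R (Set.range ℓ) = ⊤ := by
      rw [← map_mkQ_eq_top, map_span, ← Set.range_comp,
        show (N.submoduleOf N').mkQ ∘ ℓ = b from funext hℓ, b.span_eq]
    calc N' = map N'.subtype ⊤ := (map_subtype_top N').symm
      _ = map N'.subtype (N.submoduleOf N') ⊔ span R (Set.range fun i => (ℓ i : M)) := by
        rw [← hsup, Submodule.map_sup, map_span, ← Set.range_comp]; rfl
      _ ≤ N ⊔ span R (Set.range fun i => (ℓ i : M)) :=
        sup_le_sup_right (map_comap_le _ _) _

theorem Module.free_of_smooth_decomposition {o : Ordinal} {F : Ordinal → Submodule R M}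
    (hmono : ∀ α β, α ≤ β → β < o → F α ≤ F β)
    (hlim : ∀ β < o, Order.IsSuccLimit β → F β = ⨆ α : {a // a < β}, F α.1)
    (htop : ⨆ α : {a // a < o}, F α.1 = ⊤) (h₀ : Module.Free R (F 0))
    (hsucc : ∀ α < o, Module.Free R (F (α + 1) ⧸ (F α).submoduleOf (F (α + 1)))) :
    Module.Free R M := by
  obtain ⟨⟨_, b₀⟩⟩ := h₀.exists_basis
  have hlift (a : {a // a < o}) : ∃ (κ : Type _) (w : κ → M), (∀ i, w i ∈ F (a.1 + 1)) ∧
      LinearIndependent R ((F a.1).mkQ ∘ w) ∧ F (a.1 + 1) ≤ F a.1 ⊔ span R (Set.range w) :=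
    ⟨_, Submodule.exists_lift_basis_quotient (hsucc a.1 a.2).exists_basis.some.2⟩
  choose κ v hv_mem hv_ind hv_span using hlift
  let w : (Σ a, κ a) → M := fun x => v x.1 x.2
  have hind : LinearIndependent R (Sum.elim (fun i => (b₀ i : M)) w) := by
    refine (b₀.linearIndependent.map' _ (ker_subtype _)).sum_elim_of_mkQ (fun i => (b₀ i).2) ?_
    refine linearIndependent_mkQ_of_graded Sigma.fst (P := fun a => F a.1)
      (fun a => hmono 0 a.1 zero_le a.2) ?_ fun a => ?_
    · rintro ⟨a, j⟩ c (hac : a < c)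
      exact hmono _ _ (Order.add_one_le_of_lt hac) c.2 (hv_mem a j)
    · have := (linearIndepOn_range_iff sigma_mk_injective ((F a).mkQ ∘ w)).mpr (hv_ind a)
      rwa [Set.range_sigmaMk] at this
  have hspan : ⊤ ≤ span R (Set.range (Sum.elim (fun i => (b₀ i : M)) w)) := by
    rw [← htop]
    refine iSup_le fun a => Ordinal.apply_le_of_continuous hlim ?_ (fun β hβ ih => ?_) a.2
    · calc F 0 = map (F 0).subtype (span R (Set.range b₀)) := by
            rw [b₀.span_eq, map_subtype_top]
        _ = span R (Set.range fun i => (b₀ i : M)) := by rw [map_span, ← Set.range_comp]; rfl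
        _ ≤ _ := span_mono (Set.range_comp_subset_range Sum.inl (Sum.elim _ w))
    · refine (hv_span ⟨β, (lt_add_one β).trans hβ⟩).trans (sup_le ih (span_mono ?_))
      rintro _ ⟨j, rfl⟩
      exact ⟨Sum.inr ⟨_, j⟩, rfl⟩
  exact Module.Free.of_basis (Module.Basis.mk hind hspan)

namespace Module.Basis

theorem nonempty_quotient_span_image_insert_equiv {ι : Type*} (b : Basis ι R M)
    {s t : Set ι} {i : ι} (hi : i ∉ s) (ht : t = insert i s) :
    Nonempty ((↥(span R (b '' t)) ⧸ (span R (b '' s)).submoduleOf (span R (b '' t)))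
      ≃ₗ[R] R) := by
  let ψ := b.coord i ∘ₗ (span R (b '' t)).subtype
  have hbi : b i ∈ span R (b '' t) := subset_span ⟨i, ht ▸ Set.mem_insert i s, rfl⟩
  have hsurj : Function.Surjective ψ := fun r => ⟨r • ⟨b i, hbi⟩, by simp [ψ]⟩
  have hker : LinearMap.ker ψ = (span R (b '' s)).submoduleOf (span R (b '' t)) := by
    ext ⟨x, hx⟩
    rw [b.mem_span_image, ht] at hx
    simp only [LinearMap.mem_ker, submoduleOf, mem_comap, subtype_apply, b.mem_span_image, ψ,
      LinearMap.coe_comp, Function.comp_apply, coord_apply]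
    constructor
    · intro hxi j hj
      exact (hx hj).resolve_left fun hji => Finsupp.mem_support_iff.mp hj (hji ▸ hxi)
    · intro hxs
      by_contra hxi
      exact hi (hxs (Finsupp.mem_support_iff.mpr hxi))
  exact ⟨(quotEquivOfEq _ _ hker.symm).trans (ψ.quotKerEquivOfSurjective hsurj)⟩

variable {o : Ordinal} (b : Basis (Set.Iio o) R M)

def spanIio (γ : Ordinal) : Submodule R M :=
  span R (b '' {i | (i : Ordinal) < γ})

theorem spanIio_mono : Monotone b.spanIio :=
  fun _ _ h => span_mono (Set.image_mono fun _ hi => lt_of_lt_of_le hi h)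

theorem spanIio_zero : b.spanIio 0 = ⊥ := by
  simp [spanIio]

theorem spanIio_of_isSuccLimit {β : Ordinal} (hβ : Order.IsSuccLimit β) :
    b.spanIio β = ⨆ α : {a // a < β}, b.spanIio α.1 := by
  have hIio : {i : ↥(Set.Iio o) | (i : Ordinal) < β} =
      ⋃ α : {a // a < β}, {i : ↥(Set.Iio o) | (i : Ordinal) < α.1} := by
    ext i
    simp only [Set.mem_ofPred_eq, Set.mem_iUnion]
    exact ⟨fun hi => ⟨⟨_, hβ.add_one_lt hi⟩, lt_add_one _⟩,
      fun ⟨α, hα⟩ => hα.trans α.2⟩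
  rw [spanIio, hIio, Set.image_iUnion, span_iUnion]
  rfl

theorem iSup_spanIio (ho : Order.IsSuccLimit o) : ⨆ α : {a // a < o}, b.spanIio α.1 = ⊤ := by
  rw [← b.spanIio_of_isSuccLimit ho, spanIio,
    Set.eq_univ_of_forall (s := {i : ↥(Set.Iio o) | (i : Ordinal) < o}) fun i => i.2,
    Set.image_univ, b.span_eq]

theorem nonempty_quotient_spanIio_succ_equiv {α : Ordinal} (hα : α < o) :
    Nonempty ((↥(b.spanIio (α + 1)) ⧸ (b.spanIio α).submoduleOf (b.spanIio (α + 1)))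
      ≃ₗ[R] R) := by
  refine b.nonempty_quotient_span_image_insert_equiv (i := ⟨α, hα⟩) (lt_irrefl α) ?_
  ext i
  simp [Order.lt_add_one_iff, le_iff_lt_or_eq, or_comm, Subtype.ext_iff]

end Module.Basis

theorem Module.Free.nonempty_basis_Iio_ord [StrongRankCondition R] [Countable R] [Infinite R]
    [Module.Free R M] (hM : ℵ₀ < #M) : Nonempty (Basis (Set.Iio (#M).ord) R M) := by
  have hcard : #(ChooseBasisIndex R M) = #M := by
    rw [← rank_eq_card_chooseBasisIndex, rank_eq_mk_of_infinite_lt R M]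
    rwa [mk_eq_aleph0 R, lift_aleph0, aleph0_lt_lift]
  obtain ⟨e⟩ : Nonempty (ChooseBasisIndex R M ≃ Set.Iio (#M).ord) := by
    rw [← lift_mk_eq', mk_Iio_ordinal, card_ord, hcard, lift_lift]
  exact ⟨(chooseBasis R M).reindex e⟩

end

/-- An uncountable abelian group `G` of cardinality `τ` is free iff it admits a
smooth decomposition `{G_α : α < τ}` with `G_0` countable and free and all
successive quotients `G_{α+1}/G_α` countable and free. -/
theorem free_iff_smooth_decomposition_countable_free
    (G : Type*) [AddCommGroup G] (τ : Cardinal)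
    (hcard : Cardinal.mk G = τ) (huncount : Cardinal.aleph0 < τ) :
    Module.Free ℤ G ↔
      ∃ F : Ordinal → AddSubgroup G,
        (∀ α β : Ordinal, α ≤ β → β < τ.ord → F α ≤ F β) ∧
        (∀ β : Ordinal, β < τ.ord → Order.IsSuccLimit β →
          F β = ⨆ α : {a : Ordinal // a < β}, F α.1) ∧
        (⨆ α : {a : Ordinal // a < τ.ord}, F α.1) = ⊤ ∧
        Countable (F 0) ∧ Module.Free ℤ (F 0) ∧
        (∀ α : Ordinal, α < τ.ord →
          Countable ((F (α + 1)) ⧸ ((F α).addSubgroupOf (F (α + 1)))) ∧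
          Module.Free ℤ ((F (α + 1)) ⧸ ((F α).addSubgroupOf (F (α + 1))))) := by
  subst hcard
  constructor
  · intro hfree
    obtain ⟨b⟩ := Module.Free.nonempty_basis_Iio_ord (R := ℤ) huncount
    have hzero : AddSubgroup.toIntSubmodule.symm (b.spanIio 0) = ⊥ := by
      rw [b.spanIio_zero, OrderIso.map_bot]
    refine ⟨fun γ => AddSubgroup.toIntSubmodule.symm (b.spanIio γ),
      fun α β h _ => OrderIso.monotone _ (b.spanIio_mono h), fun β _ hβ => ?_, ?_,
      by beta_reduce; rw [hzero]; infer_instance, by beta_reduce; rw [hzero]; infer_instance,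
      fun α hα => ?_⟩
    · beta_reduce
      rw [b.spanIio_of_isSuccLimit hβ, OrderIso.map_iSup]
    · rw [← OrderIso.map_iSup, b.iSup_spanIio (isSuccLimit_ord huncount.le), OrderIso.map_top]
    · obtain ⟨e⟩ := b.nonempty_quotient_spanIio_succ_equiv hα
      exact ⟨Countable.of_equiv ℤ e.symm.toEquiv, Module.Free.of_equiv e.symm⟩
  · rintro ⟨F, hmono, hlim, htop, -, hfree₀, hsucc⟩
    exact Module.free_of_smooth_decomposition (F := fun γ => AddSubgroup.toIntSubmodule (F γ))
      hmono (fun β hβ hl => by rw [hlim β hβ hl, OrderIso.map_iSup])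
      (by rw [← OrderIso.map_iSup, htop, OrderIso.map_top]) hfree₀
      fun α hα => (hsucc α hα).2
end

section
/- Let f : G → L be a group homomorphism between abelian groups, and let (G_α)_{α∈A} and (L_α)_{α∈A} be two families of subgroups of G and L respectively, indexed by the same countably-directed partially ordered set A, each directed, continuous along countable chains (if B ⊆ A is a countable chain with supremum β then G_β = ⋃_{α∈B} G_α and similarly for L), with each |G_α|, |L_α| ≤ ℵ₀, ⋃ G_α = G, and ⋃ L_α = L. Then there exists a cofinal subset B of A, closed under suprema of countable chains, such that f(G_α) ⊆ L_α for every α ∈ B. -/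
/-- ω-Spectral Theorem for abelian groups: given a homomorphism `f : G → L` and
smooth directed decompositions of `G` and `L` into countable subgroups indexed
by the same countably-directed poset `A`, there is a cofinal subset `B ⊆ A`,
closed under suprema of countable chains, with `f(G_α) ⊆ L_α` for all `α ∈ B`. -/
theorem omega_spectral_theorem_abelian
    (G L : Type*) [AddCommGroup G] [AddCommGroup L]
    (A : Type*) [PartialOrder A]
    (hdir : ∀ S : Set A, S.Countable → ∃ b : A, ∀ a ∈ S, a ≤ b)
    (hchainsup : ∀ S : Set A, S.Countable → IsChain (· ≤ ·) S → S.Nonempty →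
      ∃ b : A, IsLUB S b)
    (GF : A → AddSubgroup G) (LF : A → AddSubgroup L)
    (hGmono : Monotone GF) (hLmono : Monotone LF)
    (hGcount : ∀ a : A, Countable (GF a)) (hLcount : ∀ a : A, Countable (LF a))
    (hGcont : ∀ S : Set A, S.Countable → IsChain (· ≤ ·) S → S.Nonempty →
      ∀ b : A, IsLUB S b → GF b = ⨆ a ∈ S, GF a)
    (hLcont : ∀ S : Set A, S.Countable → IsChain (· ≤ ·) S → S.Nonempty →
      ∀ b : A, IsLUB S b → LF b = ⨆ a ∈ S, LF a)
    (hGunion : (⨆ a : A, GF a) = ⊤) (hLunion : (⨆ a : A, LF a) = ⊤)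
    (f : G →+ L) :
    ∃ B : Set A,
      (∀ a : A, ∃ b ∈ B, a ≤ b) ∧
      (∀ S : Set A, S ⊆ B → S.Countable → IsChain (· ≤ ·) S → S.Nonempty →
        ∀ b : A, IsLUB S b → b ∈ B) ∧
      (∀ a ∈ B, (GF a).map f ≤ LF a) := by
  classical
  have hdirected : ∀ c d : A, ∃ e, c ≤ e ∧ d ≤ e := by
    intro c d
    obtain ⟨e, he⟩ := hdir {c, d} ((Set.countable_singleton d).insert c)
    exact ⟨e, he c (by simp), he d (by simp)⟩
  have hLdir : Directed (· ≤ ·) LF := fun c d => by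
    obtain ⟨e, h1, h2⟩ := hdirected c d
    exact ⟨e, hLmono h1, hLmono h2⟩
  -- step lemma
  have step : ∀ c : A, ∃ d, c ≤ d ∧ (GF c).map f ≤ LF d := by
    intro c
    haveI := hGcount c
    haveI : Nonempty A := ⟨c⟩
    have hx : ∀ x : GF c, ∃ a : A, f x ∈ LF a := by
      intro x
      have : f (x : G) ∈ (⨆ a : A, LF a) := by rw [hLunion]; trivial
      exact (AddSubgroup.mem_iSup_of_directed hLdir).mp this
    choose ix hix using hx
    obtain ⟨d, hd⟩ := hdir (Set.range ix ∪ {c})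
      ((Set.countable_range ix).union (Set.countable_singleton c))
    refine ⟨d, hd c (Or.inr rfl), ?_⟩
    rintro y ⟨x, hxmem, rfl⟩
    exact hLmono (hd (ix ⟨x, hxmem⟩) (Or.inl ⟨_, rfl⟩)) (hix ⟨x, hxmem⟩)
  choose nxt hnxt1 hnxt2 using step
  refine ⟨{a | (GF a).map f ≤ LF a}, ?_, ?_, fun a ha => ha⟩
  · -- cofinal
    intro a0
    set seq : ℕ → A := fun n => nxt^[n] a0 with hseq
    have hseq_succ : ∀ n, seq (n+1) = nxt (seq n) := fun n =>
      Function.iterate_succ_apply' _ _ _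
    have hmono : Monotone seq := monotone_nat_of_le_succ (fun n => by
      rw [hseq_succ]; exact hnxt1 _)
    have hS : IsChain (· ≤ ·) (Set.range seq) := by
      rintro _ ⟨m, rfl⟩ _ ⟨n, rfl⟩ _
      rcases le_total m n with h | h
      · exact Or.inl (hmono h)
      · exact Or.inr (hmono h)
    obtain ⟨b, hb⟩ := hchainsup (Set.range seq) (Set.countable_range _) hS ⟨_, 0, rfl⟩
    refine ⟨b, ?_, hb.1 ⟨0, rfl⟩⟩
    have hGb := hGcont _ (Set.countable_range _) hS ⟨_, 0, rfl⟩ b hb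
    show (GF b).map f ≤ LF b
    rw [hGb, iSup_range, AddSubgroup.map_iSup]
    refine iSup_le fun n => ?_
    calc (GF (seq n)).map f ≤ LF (seq (n+1)) := by rw [hseq_succ]; exact hnxt2 _
      _ ≤ LF b := hLmono (hb.1 ⟨n+1, rfl⟩)
  · -- closed under countable chain sups
    intro S hSB hScount hSchain hSne b hb
    have hGb := hGcont _ hScount hSchain hSne b hb
    show (GF b).map f ≤ LF b
    rw [hGb, AddSubgroup.map_iSup]
    refine iSup_le fun a => ?_
    rw [AddSubgroup.map_iSup]
    refine iSup_le fun ha => ?_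
    exact le_trans (hSB ha) (hLmono (hb.1 ha))
end

section
/- Every subgroup of an arbitrary free abelian group is free (proved via smooth decompositions: intersect a smooth filtration witnessing freeness of the ambient group with the subgroup and apply Eklof's criterion). -/
/-!
Well-order a basis of the ambient free module, so that it becomes `ι →₀ R` with `ι` well
ordered. For a submodule `N` and each `i`, the `i`-th coordinates of the elements of `N`
supported on `Iic i` form an ideal of the principal ideal domain `R`; pick such an element
`w i` whose `i`-th coordinate generates that ideal. The `w i` with nonzero `i`-th coordinate
are linearly independent since they are triangular, and they span `N`: transfinite induction
on the largest index of the support, subtracting a multiple of `w i` to kill the top coordinate.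
-/

open Finsupp Set Submodule

section Triangular

variable {R ι : Type*} [Ring R] [LinearOrder ι]

theorem Finsupp.exists_mem_support_mem_supported_Iic {f : ι →₀ R} (hf : f ≠ 0) :
    ∃ j ∈ f.support, f ∈ supported R R (Iic j) :=
  have hne : f.support.Nonempty := support_nonempty_iff.mpr hf
  ⟨f.support.max' hne, f.support.max'_mem hne, fun k hk => f.support.le_max' k hk⟩

theorem Finsupp.mem_supported_Iio_of_apply_eq_zero {f : ι →₀ R} {i : ι}
    (hf : f ∈ supported R R (Iic i)) (hfi : f i = 0) : f ∈ supported R R (Iio i) := by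
  refine (mem_supported' R f).mpr fun k hk => ?_
  rcases (not_lt.mp hk).eq_or_lt with rfl | hik
  · exact hfi
  · exact (mem_supported' R f).mp hf k (not_le.mpr hik)

theorem Submodule.inf_supported_le_of_forall_Iic {N T : Submodule R (ι →₀ R)} {s : Set ι}
    (h : ∀ j ∈ s, N ⊓ supported R R (Iic j) ≤ T) : N ⊓ supported R R s ≤ T := by
  rintro f ⟨hfN, hfs⟩
  rcases eq_or_ne f 0 with rfl | hf
  · exact T.zero_mem
  obtain ⟨j, hj, hfj⟩ := exists_mem_support_mem_supported_Iic hf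
  exact h j (hfs hj) ⟨hfN, hfj⟩

theorem Finsupp.linearIndepOn_of_mem_supported_Iic [NoZeroDivisors R] {v : ι → ι →₀ R}
    {s : Set ι} (hv : ∀ i ∈ s, v i ∈ supported R R (Iic i)) (hdiag : ∀ i ∈ s, v i i ≠ 0) :
    LinearIndepOn R v s := by
  rw [linearIndepOn_iff]
  intro l hls hl
  by_contra hl0
  obtain ⟨j, hj, hlj⟩ := exists_mem_support_mem_supported_Iic hl0
  have hjs : j ∈ s := hls hj
  have htop : linearCombination R v l j = l j * v j j := by
    rw [linearCombination_apply, sum_apply, Finsupp.sum, Finset.sum_eq_single j]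
    · rfl
    · intro i hi hne
      have hij : i < j := lt_of_le_of_ne (hlj hi) hne
      rw [smul_apply, (mem_supported' R _).mp (hv i (hls hi)) j (not_le.mpr hij), smul_zero]
    · exact fun hj' => absurd hj hj'
  rw [hl, zero_apply, eq_comm] at htop
  exact mul_ne_zero (mem_support_iff.mp hj) (hdiag j hjs) htop

end Triangular

section PID

variable {R ι : Type*} [CommRing R] [IsPrincipalIdealRing R] [LinearOrder ι]

noncomputable def Submodule.leadingCoeffIdeal (N : Submodule R (ι →₀ R)) (i : ι) : Ideal R :=
  (N ⊓ supported R R (Iic i)).map (lapply i)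

theorem Submodule.exists_mem_inf_supported_apply_eq_generator (N : Submodule R (ι →₀ R))
    (i : ι) : ∃ w ∈ N ⊓ supported R R (Iic i),
      w i = IsPrincipal.generator (N.leadingCoeffIdeal i) :=
  mem_map.mp (IsPrincipal.generator_mem (N.leadingCoeffIdeal i))

theorem Submodule.le_span_of_apply_eq_generator [WellFoundedLT ι] {N : Submodule R (ι →₀ R)}
    {w : ι → ι →₀ R} (hw : ∀ i, w i ∈ N ⊓ supported R R (Iic i))
    (hwi : ∀ i, w i i = IsPrincipal.generator (N.leadingCoeffIdeal i)) :
    N ≤ span R (w '' {i | w i i ≠ 0}) := by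
  set T := span R (w '' {i | w i i ≠ 0})
  suffices h : ∀ i, N ⊓ supported R R (Iic i) ≤ T by
    simpa [supported_univ] using inf_supported_le_of_forall_Iic (s := univ) fun i _ => h i
  intro i
  induction i using WellFoundedLT.induction with
  | _ i IH =>
  have below : N ⊓ supported R R (Iio i) ≤ T := inf_supported_le_of_forall_Iic IH
  rintro f ⟨hfN, hfi⟩
  by_cases hf0 : f i = 0
  · exact below ⟨hfN, mem_supported_Iio_of_apply_eq_zero hfi hf0⟩
  obtain ⟨c, hc⟩ : IsPrincipal.generator (N.leadingCoeffIdeal i) ∣ f i :=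
    (IsPrincipal.mem_iff_generator_dvd _).mp (mem_map_of_mem (f := lapply i) ⟨hfN, hfi⟩)
  rw [← hwi] at hc
  have hwT : w i ∈ T := subset_span ⟨i, left_ne_zero_of_mul (hc ▸ hf0), rfl⟩
  have hrest : f - c • w i ∈ N ⊓ supported R R (Iio i) := by
    refine ⟨N.sub_mem hfN (N.smul_mem c (hw i).1), mem_supported_Iio_of_apply_eq_zero
      (sub_mem hfi (smul_mem _ c (hw i).2)) ?_⟩
    simp [hc, mul_comm]
  simpa using T.add_mem (below hrest) (T.smul_mem c hwT)

theorem Submodule.free_of_wellFoundedLT [IsDomain R] [WellFoundedLT ι]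
    (N : Submodule R (ι →₀ R)) : Module.Free R N := by
  choose w hw hwi using N.exists_mem_inf_supported_apply_eq_generator
  have hli : LinearIndepOn R w {i | w i i ≠ 0} :=
    linearIndepOn_of_mem_supported_Iic (fun i _ => (hw i).2) fun _ hi => hi
  have hspan : span R (w '' {i | w i i ≠ 0}) = N :=
    le_antisymm (span_le.mpr (image_subset_iff.mpr fun i _ => (hw i).1))
      (le_span_of_apply_eq_generator hw hwi)
  rw [image_eq_range] at hspan
  exact .of_basis ((Module.Basis.span hli).map (LinearEquiv.ofEq _ _ hspan))

end PID

theorem Submodule.free_of_free {R M : Type*} [CommRing R] [IsDomain R] [IsPrincipalIdealRing R]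
    [AddCommGroup M] [Module R M] [Module.Free R M] (N : Submodule R M) : Module.Free R N := by
  let ι := Module.Free.ChooseBasisIndex R M
  let b := Module.Free.chooseBasis R M
  let _ : LinearOrder ι := IsWellOrder.linearOrder WellOrderingRel
  have : WellFoundedLT ι := ⟨WellOrderingRel.isWellOrder.wf⟩
  have := free_of_wellFoundedLT (N.map b.repr.toLinearMap)
  exact .of_equiv (equivMapOfInjective _ b.repr.injective N).symm

/-- Every subgroup of a free abelian group (of arbitrary cardinality) is free. -/
theorem addSubgroup_free_of_free
    (G : Type*) [AddCommGroup G] (hG : Module.Free ℤ G)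
    (H : AddSubgroup G) : Module.Free ℤ H :=
  Submodule.free_of_free H.toIntSubmodule
end

section
/- For a compact connected metrizable abelian group G, the exponential map exp_G : L(G) → G is surjective if and only if it is an open map. -/
/-!
If `exp` is open, its range is an open, hence closed, subgroup of the connected group `G`, so it
is all of `G`. Conversely, with the uniformity of uniform convergence on compacta, `L(G)` is a
complete second countable group (a closed subgroup of `C(ℝ, G)`) and the compact group `G` is a
Baire space, so the Banach–Schauder proof of the open mapping theorem applies: Baire category
makes the closure of the image of each neighbourhood of `0` a neighbourhood of `0`, and
completeness removes the closure by summing a series of successive approximations.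
-/

open Topology Filter Set Pointwise

theorem sum_mem_of_forall_mem_succ {A : Type*} [AddCommMonoid A] [TopologicalSpace A]
    {u : ℕ → Set A} (hu : (𝓝 0).HasAntitoneBasis u)
    (hu_add : ∀ n, u (n + 1) + u (n + 1) ⊆ u n) {a : ℕ → A} (ha : ∀ n, a n ∈ u (n + 1))
    (t : Finset ℕ) {n : ℕ} (ht : ∀ j ∈ t, n ≤ j) : ∑ j ∈ t, a j ∈ u n := by
  classical
  induction t using Finset.induction_on_min generalizing n with
  | empty => simpa using mem_of_mem_nhds (hu.mem n)
  | insert m t hm ih =>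
    rw [Finset.sum_insert fun hmt => (hm m hmt).false]
    refine hu.antitone (ht m (Finset.mem_insert_self m t)) (hu_add m (add_mem_add (ha m) ?_))
    exact ih fun j hj => hm j hj

theorem summable_of_forall_mem_succ {A : Type*} [AddCommGroup A] [UniformSpace A]
    [IsUniformAddGroup A] [CompleteSpace A] {u : ℕ → Set A} (hu : (𝓝 0).HasAntitoneBasis u)
    (hu_add : ∀ n, u (n + 1) + u (n + 1) ⊆ u n) {a : ℕ → A} (ha : ∀ n, a n ∈ u (n + 1)) :
    Summable a := by
  refine summable_iff_vanishing.2 fun e he => ?_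
  obtain ⟨n, hn⟩ := hu.mem_iff.1 he
  refine ⟨Finset.range n, fun t ht => hn (sum_mem_of_forall_mem_succ hu hu_add ha t ?_)⟩
  exact fun j hj => by simpa using Finset.disjoint_left.1 ht hj

section TopologicalAddGroup

variable {B : Type*} [AddCommGroup B] [TopologicalSpace B] [IsTopologicalAddGroup B]

theorem exists_sub_sum_range_mem_closure {S : ℕ → Set B} (hS : ∀ n, closure (S n) ∈ 𝓝 0)
    {y : B} (hy : y ∈ closure (S 0)) :
    ∃ b : ℕ → B, ∀ n, b n ∈ S n ∧ y - ∑ j ∈ Finset.range n, b j ∈ closure (S n) := by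
  have step : ∀ n, ∀ x ∈ closure (S n), ∃ b ∈ S n, x - b ∈ closure (S (n + 1)) := by
    intro n x hx
    obtain ⟨b, hb, hbx⟩ := mem_closure_iff_nhds_zero.1 hx _ (neg_mem_nhds_zero B (hS (n + 1)))
    exact ⟨b, hb, by simpa using hbx⟩
  choose! next hnext_mem hnext_sub using step
  let r : ℕ → B := fun n => Nat.rec y (fun n x => x - next n x) n
  have hr : ∀ n, r n ∈ closure (S n) := fun n => by
    induction n with
    | zero => exact hy
    | succ n ih => exact hnext_sub n _ ih
  refine ⟨fun n => next n (r n), fun n => ⟨hnext_mem n _ (hr n), ?_⟩⟩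
  suffices y - ∑ j ∈ Finset.range n, next j (r j) = r n from this ▸ hr n
  induction n with
  | zero => simp [r]
  | succ n ih => rw [Finset.sum_range_succ, ← sub_sub, ih]

theorem tendsto_zero_of_mem_closure_image {A : Type*} [TopologicalSpace A] [Zero A]
    {F : Type*} [FunLike F A B] [ZeroHomClass F A B] (φ : F) (hφ : Continuous φ)
    {v : ℕ → Set A} (hv : Tendsto v atTop (𝓝 0).smallSets) {r : ℕ → B}
    (hr : ∀ n, r n ∈ closure (φ '' v n)) : Tendsto r atTop (𝓝 0) := by
  intro N hN
  obtain ⟨N', hN', hN'_closed, hN'N⟩ := exists_mem_nhds_isClosed_subset hN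
  have hpre : φ ⁻¹' N' ∈ 𝓝 0 := hφ.continuousAt.preimage_mem_nhds (by simpa using hN')
  exact (hv.eventually (eventually_smallSets_subset.2 hpre)).mono fun n hn =>
    hN'N (closure_minimal (image_subset_iff.2 hn) hN'_closed (hr n))

end TopologicalAddGroup

namespace AddMonoidHom

section TopologicalAddGroup

variable {A B : Type*} [AddCommGroup A] [TopologicalSpace A]
  [AddCommGroup B] [TopologicalSpace B] [IsTopologicalAddGroup B]

theorem closure_image_mem_nhds_zero [IsTopologicalAddGroup A] [SecondCountableTopology A]
    [BaireSpace B] (φ : A →+ B) (hφ : Function.Surjective φ) {U : Set A} (hU : U ∈ 𝓝 0) :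
    closure (φ '' U) ∈ 𝓝 0 := by
  obtain ⟨V, hV, -, hV_neg, hVU⟩ := exists_closed_nhds_zero_neg_eq_add_subset hU
  obtain ⟨s, hs, hs_cover⟩ : ∃ s : Set A, s.Countable ∧ ⋃ a ∈ s, a +ᵥ V = univ :=
    TopologicalSpace.countable_cover_nhds fun a => by
      simpa using (vadd_mem_nhds_vadd_iff (a := (0 : A)) a).2 hV
  have : Countable s := hs.to_subtype
  obtain ⟨a, ha⟩ : ∃ a : s, (interior (φ a +ᵥ closure (φ '' V))).Nonempty := by
    refine nonempty_interior_of_iUnion_of_closed (fun a => isClosed_closure.vadd _) ?_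
    refine eq_univ_of_forall fun y => ?_
    obtain ⟨x, rfl⟩ := hφ y
    obtain ⟨a, has, v, hv, rfl⟩ : ∃ a ∈ s, x ∈ a +ᵥ V := by
      simpa only [mem_iUnion, exists_prop] using hs_cover.ge (mem_univ x)
    exact mem_iUnion.2 ⟨⟨a, has⟩, φ v, subset_closure (mem_image_of_mem φ hv), by simp⟩
  obtain ⟨w, hw⟩ : (interior (closure (φ '' V))).Nonempty := by
    simpa [interior_vadd] using ha
  have hsub : closure (φ '' V) - closure (φ '' V) ⊆ closure (φ '' U) := by
    rintro _ ⟨x, hx, y, hy, rfl⟩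
    refine map_mem_closure₂ continuous_sub hx hy ?_
    rintro _ ⟨v, hv, rfl⟩ _ ⟨v', hv', rfl⟩
    refine ⟨v + -v', hVU (add_mem_add hv ?_), by simp [sub_eq_add_neg]⟩
    rwa [← hV_neg, Set.neg_mem_neg]
  refine mem_of_superset (mem_interior_iff_mem_nhds.1 ?_) hsub
  simpa using subset_interior_sub (sub_mem_sub hw hw)

theorem surjective_of_isOpenMap [ConnectedSpace B] (φ : A →+ B) (hφ : IsOpenMap φ) :
    Function.Surjective φ := by
  have hopen : IsOpen (φ.range : Set B) := by simpa using hφ.isOpen_range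
  have hclopen : IsClopen (φ.range : Set B) := ⟨φ.range.isClosed_of_isOpen hopen, hopen⟩
  exact φ.range_eq_top.1 (AddSubgroup.coe_eq_univ.1 (hclopen.eq_univ ⟨0, φ.range.zero_mem⟩))

end TopologicalAddGroup

section UniformAddGroup

variable {A B : Type*} [AddCommGroup A] [UniformSpace A] [IsUniformAddGroup A]
  [AddCommGroup B] [TopologicalSpace B] [IsTopologicalAddGroup B]

theorem image_mem_nhds_zero_of_closure_image [FirstCountableTopology A] [CompleteSpace A]
    [T2Space B] (φ : A →+ B) (hφ : Continuous φ)
    (hcl : ∀ U ∈ 𝓝 (0 : A), closure (φ '' U) ∈ 𝓝 0) {U : Set A} (hU : U ∈ 𝓝 0) :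
    φ '' U ∈ 𝓝 0 := by
  obtain ⟨C, hC, hC_closed, hCU⟩ := exists_mem_nhds_isClosed_subset hU
  obtain ⟨u, hu, hu_add⟩ := IsTopologicalAddGroup.exists_antitone_basis_nhds_zero A
  obtain ⟨k, hk⟩ := hu.mem_iff.1 hC
  -- Shifting the basis puts every partial sum of the series built below into `C`.
  set v : ℕ → Set A := fun n => u (n + k)
  have hv : (𝓝 0).HasAntitoneBasis v :=
    hu.comp_mono (monotone_id.add_const k) (tendsto_add_atTop_nat k)
  have hv_add : ∀ n, v (n + 1) + v (n + 1) ⊆ v n := fun n => by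
    simpa only [v, add_right_comm] using hu_add (n + k)
  refine mem_of_superset (hcl _ (hv.mem 1)) fun y hy => ?_
  obtain ⟨b, hb⟩ := exists_sub_sum_range_mem_closure (S := fun n => φ '' v (n + 1))
    (fun n => hcl _ (hv.mem _)) hy
  choose a ha hab using fun n => (hb n).1
  have hsum : Summable a := summable_of_forall_mem_succ hv hv_add ha
  have hmem : ∑' n, a n ∈ C := hC_closed.mem_of_tendsto hsum.hasSum <| .of_forall fun t =>
    hk (by simpa [v] using sum_mem_of_forall_mem_succ hv hv_add ha t fun j _ => j.zero_le)
  refine ⟨∑' n, a n, hCU hmem, tendsto_nhds_unique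
    ((hφ.tendsto _).comp hsum.hasSum.tendsto_sum_nat) ?_⟩
  have hrem := tendsto_zero_of_mem_closure_image φ hφ
    (hv.tendsto_smallSets.comp (tendsto_add_atTop_nat 1)) fun n => (hb n).2
  simpa [Function.comp_def, map_sum, hab] using tendsto_const_nhds (x := y) |>.sub hrem

theorem isOpenMap_of_surjective [SecondCountableTopology A] [CompleteSpace A] [BaireSpace B]
    [T2Space B] (φ : A →+ B) (hφ : Continuous φ) (hsurj : Function.Surjective φ) :
    IsOpenMap φ :=
  IsTopologicalAddGroup.isOpenMap_iff_nhds_zero.2 <| Filter.le_map fun _ hU =>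
    φ.image_mem_nhds_zero_of_closure_image hφ
      (fun _ hV => φ.closure_image_mem_nhds_zero hsurj hV) hU

end UniformAddGroup

end AddMonoidHom

namespace ContinuousAddMonoidHom

variable {X G : Type*} [AddMonoid X] [TopologicalSpace X] [AddCommGroup G]

def evalAddMonoidHom [TopologicalSpace G] [IsTopologicalAddGroup G] (x : X) :
    (X →ₜ+ G) →+ G where
  toFun f := f x
  map_zero' := rfl
  map_add' _ _ := rfl

variable [UniformSpace G] [IsUniformAddGroup G]

instance instUniformSpace : UniformSpace (X →ₜ+ G) :=
  .comap toContinuousMap inferInstance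

instance : IsUniformAddGroup (X →ₜ+ G) :=
  IsUniformInducing.isUniformAddGroup
    ({ toFun := fun f => UniformOnFun.ofFun {K : Set X | IsCompact K} f
       map_zero' := rfl
       map_add' := fun _ _ => rfl } : (X →ₜ+ G) →+ UniformOnFun X G {K | IsCompact K})
    (ContinuousMap.isUniformEmbedding_toUniformOnFunIsCompact.isUniformInducing.comp
      (f := toContinuousMap) ⟨rfl⟩)

instance [CompactlyCoherentSpace X] [CompleteSpace G] [T2Space G] : CompleteSpace (X →ₜ+ G) :=
  (completeSpace_iff_isComplete_range (f := toContinuousMap) ⟨rfl⟩).2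
    (isClosedEmbedding_toContinuousMap X G).isClosed_range.isComplete

end ContinuousAddMonoidHom

/-- For a compact connected metrizable abelian group `G`, the exponential map
`exp_G : L(G) → G`, `f ↦ f 1`, is surjective iff it is open. -/
theorem expMap_surjective_iff_isOpenMap
    (G : Type*) [AddCommGroup G] [TopologicalSpace G] [IsTopologicalAddGroup G]
    [CompactSpace G] [T2Space G] [ConnectedSpace G]
    [TopologicalSpace.MetrizableSpace G] :
    Function.Surjective (fun f : ContinuousAddMonoidHom ℝ G => f 1) ↔
      IsOpenMap (fun f : ContinuousAddMonoidHom ℝ G => f 1) := by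
  let expHom := ContinuousAddMonoidHom.evalAddMonoidHom (X := ℝ) (G := G) 1
  let : UniformSpace G := IsTopologicalAddGroup.rightUniformSpace G
  have : IsUniformAddGroup G := isUniformAddGroup_of_addCommGroup
  have : SecondCountableTopology (ℝ →ₜ+ G) :=
    (ContinuousAddMonoidHom.isInducing_toContinuousMap ℝ G).secondCountableTopology
  exact ⟨expHom.isOpenMap_of_surjective (continuous_eval_const 1),
    expHom.surjective_of_isOpenMap⟩
end
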